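/- Fix an integer n ≥ 1. For α > 0, the Charlier polynomial C_n^{(α)} has n distinct real zeros x_1(α) < ⋯ < x_n(α) in (0, ∞), and for each j ∈ {1,...,n} the zero x_j(α) is a strictly increasing function of α on (0, ∞). -/

import Mathlib

/-- Pochhammer symbol `(a)_k = ∏_{j=0}^{k-1} (a + j)`. -/
noncomputable def poch (a : ℝ) (k : ℕ) : ℝ := ∏ j ∈ Finset.range k, (a + (j : ℝ))

/-- Charlier polynomial `C_n^{(α)}(x)`. -/
noncomputable def charlierPoly (n : ℕ) (α x : ℝ) : ℝ :=
  ∑ k ∈ Finset.range (n + 1),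
    poch (-(n : ℝ)) k * poch (-x) k / (Nat.factorial k : ℝ) * (-1 / α) ^ k

/-!
Up to the factor `(-α)^n`, `C_n^{(α)}` is the monic polynomial `Q_n` of the three-term recurrence
`Q_{n+2} = (X - (n + 1 + α)) Q_{n+1} - (n + 1) α Q_n`, which follows from two contiguous relations
of the hypergeometric sum. Since `(n + 1) α > 0`, the usual sign-alternation argument shows that the
zeros of `Q_{n+1}` are real and simple and interlace those of `Q_n`, the sign of `Q_n` at the `j`-th
zero being `(-1)^(n - j)`; they are positive because `Q_m(0) = (-α)^m`. Differentiating the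
recurrence in `α` gives `∂_α Q_{n+1} = -(n + 1) Q_n`, so by the interlacing signs every zero moves
to the right as `α` grows. The argument is local in `α` (isolating intervals around the zeros and the
mean value theorem in `α`), and strict monotonicity that holds locally on `(0, ∞)` holds globally.
-/

open Polynomial Finset Filter Topology

variable {α : ℝ}

@[simp] lemma poch_zero (a : ℝ) : poch a 0 = 1 := prod_range_zero _

lemma poch_eq_eval_ascPochhammer (a : ℝ) (k : ℕ) : poch a k = (ascPochhammer ℝ k).eval a := by
  induction k with
  | zero => simp [poch]
  | succ k ih => rw [poch, prod_range_succ, ← poch, ih, ascPochhammer_succ_eval]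

lemma poch_succ (a : ℝ) (k : ℕ) : poch a (k + 1) = poch a k * (a + k) := prod_range_succ _ _

lemma poch_succ_left (a : ℝ) (k : ℕ) : poch a (k + 1) = a * poch (a + 1) k := by
  rw [poch, prod_range_succ']
  simp only [Nat.cast_add, Nat.cast_one, Nat.cast_zero, add_zero, poch]
  rw [mul_comm]
  congr 1
  exact prod_congr rfl fun j _ => by ring

lemma poch_neg_natCast_div_factorial (n k : ℕ) :
    poch (-(n : ℝ)) k / k.factorial = (-1) ^ k * n.choose k := by
  rw [poch_eq_eval_ascPochhammer, ascPochhammer_eval_neg_eq_descPochhammer,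
    descPochhammer_eval_eq_descFactorial, Nat.descFactorial_eq_factorial_mul_choose]
  push_cast
  field_simp

lemma charlierPoly_eq_sum_choose (n : ℕ) (α x : ℝ) :
    charlierPoly n α x = ∑ k ∈ range (n + 1), n.choose k * (poch (-x) k / α ^ k) := by
  refine sum_congr rfl fun k _ => ?_
  rw [mul_div_right_comm, poch_neg_natCast_div_factorial, div_pow, ← mul_div_assoc, ← mul_div_assoc]
  have hsq : ((-1 : ℝ) ^ k * (-1) ^ k) = 1 := by rw [← mul_pow]; norm_num
  linear_combination (n.choose k * poch (-x) k / α ^ k) * hsq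

lemma poch_succ_sub_poch_add_one_succ (a : ℝ) (k : ℕ) :
    poch a (k + 1) - poch (a + 1) (k + 1) = -(k + 1) * poch (a + 1) k := by
  rw [poch_succ_left, poch_succ]
  ring

lemma charlierPoly_succ (hα : α ≠ 0) (n : ℕ) (x : ℝ) :
    α * charlierPoly (n + 1) α x = α * charlierPoly n α x - x * charlierPoly n α (x - 1) := by
  simp only [charlierPoly_eq_sum_choose]
  rw [sum_choose_succ_mul (fun i _ => poch (-x) i / α ^ i), mul_add, sub_eq_add_neg, ← neg_mul,
    add_right_inj, mul_sum, mul_sum]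
  refine sum_congr rfl fun i _ => ?_
  rw [poch_succ_left, show -x + 1 = -(x - 1) by ring]
  field_simp
  ring

lemma charlierPoly_sub_charlierPoly_sub_one (hα : α ≠ 0) (n : ℕ) (x : ℝ) :
    α * (charlierPoly (n + 1) α x - charlierPoly (n + 1) α (x - 1)) =
      -(n + 1) * charlierPoly n α (x - 1) := by
  simp only [charlierPoly_eq_sum_choose]
  rw [← sum_sub_distrib, sum_range_succ', mul_add, mul_sum, mul_sum]
  simp only [poch_zero, sub_self, mul_zero, add_zero]
  refine sum_congr rfl fun k _ => ?_
  have hchoose : ((n + 1).choose (k + 1) : ℝ) * (k + 1) = (n + 1) * n.choose k := by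
    exact_mod_cast (Nat.add_one_mul_choose_eq n k).symm
  rw [← mul_sub, ← sub_div, show -(x - 1) = -x + 1 by ring, poch_succ_sub_poch_add_one_succ,
    pow_succ]
  field_simp
  linear_combination -poch (-x + 1) k * hchoose

lemma charlierPoly_add_two (hα : α ≠ 0) (n : ℕ) (x : ℝ) :
    α * charlierPoly (n + 2) α x =
      (n + 1 + α - x) * charlierPoly (n + 1) α x - (n + 1) * charlierPoly n α x := by
  apply mul_left_cancel₀ hα
  linear_combination α * charlierPoly_succ hα (n + 1) x +
    x * charlierPoly_sub_charlierPoly_sub_one hα n x - (n + 1) * charlierPoly_succ hα n x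

lemma Polynomial.Monic.X_sub_C_mul_sub_C_mul {p q : ℝ[X]} {m : ℕ} (hp : p.Monic)
    (hpd : p.natDegree = m + 1) (hqd : q.natDegree ≤ m) (b c : ℝ) :
    ((X - C b) * p - C c * q).Monic ∧ ((X - C b) * p - C c * q).natDegree = m + 2 := by
  have hmul : ((X - C b) * p).natDegree = m + 2 := by
    rw [(monic_X_sub_C b).natDegree_mul hp, natDegree_X_sub_C, hpd]; ring
  have hlt : (C c * q).natDegree < ((X - C b) * p).natDegree :=
    (natDegree_C_mul_le c q).trans_lt (by omega)
  exact ⟨((monic_X_sub_C b).mul hp).sub_of_left (degree_lt_degree hlt),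
    by rw [natDegree_sub_eq_left_of_natDegree_lt hlt, hmul]⟩

/-- The monic polynomial `(-α)^n C_n^{(α)}(X)`, given by its three-term recurrence. -/
noncomputable def charlierMonic : ℕ → ℝ → ℝ[X]
  | 0, _ => 1
  | 1, α => X - C α
  | n + 2, α => (X - C (n + 1 + α)) * charlierMonic (n + 1) α - C ((n + 1) * α) * charlierMonic n α

lemma charlierMonic_monic_natDegree (n : ℕ) (α : ℝ) :
    (charlierMonic n α).Monic ∧ (charlierMonic n α).natDegree = n := by
  induction n using Nat.twoStepInduction with
  | zero => simp [charlierMonic]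
  | one => exact ⟨monic_X_sub_C α, natDegree_X_sub_C α⟩
  | more n ih ih' => exact ih'.1.X_sub_C_mul_sub_C_mul ih'.2 ih.2.le _ _

@[simp] lemma eval_charlierMonic_zero (α y : ℝ) : (charlierMonic 0 α).eval y = 1 := by
  simp [charlierMonic]

@[simp] lemma eval_charlierMonic_one (α y : ℝ) : (charlierMonic 1 α).eval y = y - α := by
  simp [charlierMonic]

@[simp] lemma eval_charlierMonic_add_two (n : ℕ) (α y : ℝ) :
    (charlierMonic (n + 2) α).eval y = (y - (n + 1 + α)) * (charlierMonic (n + 1) α).eval y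
      - (n + 1) * α * (charlierMonic n α).eval y := by
  simp [charlierMonic]

lemma eval_charlierMonic (hα : α ≠ 0) (n : ℕ) (x : ℝ) :
    (charlierMonic n α).eval x = (-α) ^ n * charlierPoly n α x := by
  induction n using Nat.twoStepInduction with
  | zero => simp [charlierPoly_eq_sum_choose]
  | one =>
    rw [eval_charlierMonic_one, charlierPoly_eq_sum_choose]
    simp only [sum_range_succ, sum_range_zero, poch_succ, poch_zero, Nat.choose_zero_right,
      Nat.choose_self]
    field_simp
    ring
  | more n ih ih' =>
    rw [eval_charlierMonic_add_two, ih, ih']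
    linear_combination (-α) ^ (n + 1) * charlierPoly_add_two hα n x

lemma eval_zero_charlierMonic (n : ℕ) (α : ℝ) : (charlierMonic n α).eval 0 = (-α) ^ n := by
  induction n using Nat.twoStepInduction with
  | zero => simp
  | one => simp
  | more n ih ih' => rw [eval_charlierMonic_add_two, ih, ih']; ring

lemma continuous_eval_charlierMonic (n : ℕ) :
    Continuous fun p : ℝ × ℝ => (charlierMonic n p.1).eval p.2 := by
  induction n using Nat.twoStepInduction with
  | zero => simp only [eval_charlierMonic_zero]; exact continuous_const
  | one => simp only [eval_charlierMonic_one]; fun_prop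
  | more n ih ih' => simp only [eval_charlierMonic_add_two]; fun_prop

lemma hasDerivAt_eval_charlierMonic (n : ℕ) (y t : ℝ) :
    HasDerivAt (fun α => (charlierMonic (n + 1) α).eval y)
      (-(n + 1) * (charlierMonic n t).eval y) t := by
  induction n using Nat.twoStepInduction generalizing t with
  | zero => simpa using (hasDerivAt_id t).const_sub y
  | one =>
    simp only [eval_charlierMonic_add_two, zero_add, eval_charlierMonic_one,
      eval_charlierMonic_zero]
    refine ((((hasDerivAt_id' t).const_add _).const_sub y).mul
      ((hasDerivAt_id' t).const_sub y)).sub (((hasDerivAt_id' t).const_mul _).mul_const _)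
      |>.congr_deriv ?_
    push_cast
    ring
  | more n ih ih' =>
    simp only [eval_charlierMonic_add_two] at ih' ⊢
    refine ((((hasDerivAt_id' t).const_add _).const_sub y).mul (ih' t)).sub
      (((hasDerivAt_id' t).const_mul _).mul (ih t)) |>.congr_deriv ?_
    push_cast
    ring

lemma sign_prod_sub {ι : Type*} (s : Finset ι) (r : ι → ℝ) {y : ℝ} (hy : ∀ i ∈ s, r i ≠ y) :
    0 < (-1) ^ #{i ∈ s | y < r i} * ∏ i ∈ s, (y - r i) := by
  rw [← prod_filter_mul_prod_filter_not s (fun i => y < r i), ← mul_assoc]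
  have hneg : ∏ i ∈ s with y < r i, (y - r i) = (-1) ^ #{i ∈ s | y < r i} *
      ∏ i ∈ s with y < r i, (r i - y) := by
    rw [← prod_neg]; simp
  have hsq : ((-1 : ℝ) ^ #{i ∈ s | y < r i}) * (-1) ^ #{i ∈ s | y < r i} = 1 := by
    rw [← mul_pow]; norm_num
  rw [hneg, ← mul_assoc, hsq, one_mul]
  refine mul_pos (prod_pos fun i hi => ?_) (prod_pos fun i hi => ?_)
  · exact sub_pos.mpr (mem_filter.mp hi).2
  · obtain ⟨his, hlt⟩ := mem_filter.mp hi
    exact sub_pos.mpr ((not_lt.mp hlt).lt_of_ne (hy i his))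

lemma sign_eval_prod_X_sub_C {ρ : ℕ → ℝ} {N k : ℕ} {y : ℝ} (hbelow : ∀ i < k, ρ i < y)
    (habove : ∀ i, k ≤ i → i < N → y < ρ i) :
    0 < (-1) ^ (N - k) * (∏ i ∈ range N, (X - C (ρ i))).eval y := by
  have hfilter : {i ∈ range N | y < ρ i} = Ico k N := by
    ext i
    simp only [mem_filter, mem_range, mem_Ico]
    exact ⟨fun ⟨hiN, h⟩ => ⟨not_lt.mp fun hik => (hbelow i hik).not_gt h, hiN⟩,
      fun ⟨hki, hiN⟩ => ⟨hiN, habove i hki hiN⟩⟩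
  have := sign_prod_sub (range N) ρ (y := y) fun i hi => by
    rcases lt_or_ge i k with hik | hki
    · exact (hbelow i hik).ne
    · exact (habove i hki (mem_range.mp hi)).ne'
  rw [hfilter, Nat.card_Ico] at this
  simpa [eval_prod] using this

lemma mul_neg_of_neg_one_pow_mul_pos {k : ℕ} {a b : ℝ} (ha : 0 < (-1) ^ (k + 1) * a)
    (hb : 0 < (-1) ^ k * b) : a * b < 0 := by
  have hsq : ((-1 : ℝ) ^ k) * (-1) ^ k = 1 := by rw [← mul_pow]; norm_num
  have := mul_pos ha hb
  linarith [show (-1) ^ (k + 1) * a * ((-1) ^ k * b) = -(a * b) by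
    rw [pow_succ]; linear_combination (-(a * b)) * hsq]

lemma exists_mem_Ioo_eq_zero_of_mul_neg {f : ℝ → ℝ} {a b : ℝ} (hab : a ≤ b)
    (hf : ContinuousOn f (Set.Icc a b)) (h : f a * f b < 0) : ∃ c ∈ Set.Ioo a b, f c = 0 := by
  rcases mul_neg_iff.mp h with ⟨ha, hb⟩ | ⟨ha, hb⟩
  · exact intermediate_value_Ioo' hab hf ⟨hb, ha⟩
  · exact intermediate_value_Ioo hab hf ⟨ha, hb⟩

lemma Polynomial.Monic.eq_prod_X_sub_C_of_injOn {p : ℝ[X]} (hp : p.Monic) {N : ℕ}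
    (hdeg : p.natDegree = N) {σ : ℕ → ℝ} (hσ : Set.InjOn σ (Set.Iio N))
    (hzero : ∀ i < N, p.eval (σ i) = 0) : p = ∏ i ∈ range N, (X - C (σ i)) := by
  have hdvd : ∏ i ∈ range N, (X - C (σ i)) ∣ p := by
    refine prod_dvd_of_coprime (fun i hi j hj hij => ?_) fun i hi =>
      dvd_iff_isRoot.mpr (hzero i (mem_range.mp hi))
    refine isCoprime_X_sub_C_of_isUnit_sub (sub_ne_zero.mpr fun h => hij ?_).isUnit
    exact hσ (by simpa using hi) (by simpa using hj) h
  exact eq_of_monic_of_dvd_of_natDegree_le (monic_prod_of_monic _ _ fun i _ => monic_X_sub_C _)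
    hp hdvd (by simp [hdeg])

lemma Polynomial.Monic.exists_eq_prod_X_sub_C_of_alternating {p : ℝ[X]} (hp : p.Monic) {N : ℕ}
    (hdeg : p.natDegree = N) {t : ℕ → ℝ} (ht : StrictMonoOn t (Set.Iic N))
    (halt : ∀ i < N, p.eval (t i) * p.eval (t (i + 1)) < 0) :
    ∃ σ : ℕ → ℝ, (∀ i < N, σ i ∈ Set.Ioo (t i) (t (i + 1))) ∧ StrictMonoOn σ (Set.Iio N) ∧
      p = ∏ i ∈ range N, (X - C (σ i)) := by
  have hzero : ∀ i, ∃ c, i < N → c ∈ Set.Ioo (t i) (t (i + 1)) ∧ p.eval c = 0 := by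
    intro i
    by_cases hi : i < N
    · obtain ⟨c, hc, hc0⟩ := exists_mem_Ioo_eq_zero_of_mul_neg
        (ht (show i ≤ N by omega) (show i + 1 ≤ N by omega) (by omega)).le
        p.continuous.continuousOn (halt i hi)
      exact ⟨c, fun _ => ⟨hc, hc0⟩⟩
    · exact ⟨0, fun h => absurd h hi⟩
  choose σ hσ using hzero
  have hmono : StrictMonoOn σ (Set.Iio N) := fun i hi j hj hij =>
    calc σ i < t (i + 1) := (hσ i hi).1.2
      _ ≤ t j := ht.monotoneOn (show i + 1 ≤ N by rw [Set.mem_Iio] at hj; omega)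
          (show j ≤ N by rw [Set.mem_Iio] at hj; omega) hij
      _ < σ j := (hσ j hj).1.1
  exact ⟨σ, fun i hi => (hσ i hi).1, hmono,
    hp.eq_prod_X_sub_C_of_injOn hdeg hmono.injOn fun i hi => (hσ i hi).2⟩

lemma Polynomial.Monic.exists_gt_eval_pos {p : ℝ[X]} (hp : p.Monic) (hdeg : 0 < p.natDegree)
    (a : ℝ) : ∃ M, a < M ∧ 0 < p.eval M := by
  have htop := p.tendsto_atTop_of_leadingCoeff_nonneg (natDegree_pos_iff_degree_pos.mp hdeg)
    (by rw [hp.leadingCoeff]; exact zero_le_one)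
  exact ((eventually_gt_atTop a).and (htop.eventually_gt_atTop 0)).exists

lemma StrictMono.eq_of_forall_mem_range {β : Type*} [LinearOrder β] {n : ℕ} {f g : Fin n → β}
    (hf : StrictMono f) (hg : StrictMono g) (h : ∀ i, f i ∈ Set.range g) : f = g := by
  have hcard : (univ.image g).card = n := by
    rw [card_image_of_injective _ hg.injective, card_univ, Fintype.card_fin]
  rw [orderEmbOfFin_unique hcard (fun i => by obtain ⟨k, hk⟩ := h i; simp [← hk]) hf]
  exact (orderEmbOfFin_unique hcard (fun i => mem_image_of_mem g (mem_univ i)) hg).symm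

lemma sign_prod_sub_of_separated {n : ℕ} {z : Fin n → ℝ} {δ : ℝ} (hδ : 0 < δ)
    (hgap : ∀ i k, i < k → z i + δ < z k - δ) (i : Fin n) :
    0 < (-1) ^ (n - i : ℕ) * ∏ k, (z i - δ - z k) ∧
      0 < (-1) ^ (n - 1 - i : ℕ) * ∏ k, (z i + δ - z k) := by
  have hmono : Monotone z := fun a b hab => by
    rcases hab.lt_or_eq with h | rfl
    · linarith [hgap a b h]
    · rfl
  constructor
  · have hf : filter (fun k => z i - δ < z k) univ = Ici i := by
      ext k
      simp only [mem_filter, mem_univ, true_and, mem_Ici]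
      refine ⟨fun h => not_lt.mp fun hki => ?_, fun hik => ?_⟩
      · linarith [hgap k i hki]
      · linarith [hmono hik]
    have := sign_prod_sub univ z (y := z i - δ) fun k _ => by
      rcases lt_or_ge k i with hki | hik
      · exact (show z k < z i - δ by linarith [hgap k i hki]).ne
      · exact (show z i - δ < z k by linarith [hmono hik]).ne'
    rwa [hf, Fin.card_Ici] at this
  · have hf : filter (fun k => z i + δ < z k) univ = Ioi i := by
      ext k
      simp only [mem_filter, mem_univ, true_and, mem_Ioi]
      refine ⟨fun h => not_le.mp fun hki => ?_, fun hik => ?_⟩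
      · linarith [hmono hki]
      · linarith [hgap i k hik]
    have := sign_prod_sub univ z (y := z i + δ) fun k _ => by
      rcases le_or_gt k i with hki | hik
      · exact (show z k < z i + δ by linarith [hmono hki]).ne
      · exact (show z i + δ < z k by linarith [hgap i k hik]).ne'
    rwa [hf, Fin.card_Ioi] at this

lemma exists_interlacing_zeros {p q : ℝ[X]} {m : ℕ} {ρ : ℕ → ℝ} {L : ℝ}
    (hq : q = ∏ i ∈ range (m + 1), (X - C (ρ i))) (hρ : StrictMonoOn ρ (Set.Iio (m + 1)))
    (hL : L < ρ 0) (hp : p.Monic) (hpdeg : p.natDegree = m + 2)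
    (hpL : 0 < (-1) ^ (m + 2) * p.eval L)
    (hpρ : ∀ i < m + 1, 0 < (-1) ^ (m + 1 - i) * p.eval (ρ i)) :
    ∃ σ : ℕ → ℝ, StrictMonoOn σ (Set.Iio (m + 2)) ∧ L < σ 0 ∧
      p = ∏ i ∈ range (m + 2), (X - C (σ i)) ∧
      ∀ i < m + 2, 0 < (-1) ^ (m + 1 - i) * q.eval (σ i) := by
  obtain ⟨M, hρM, hM⟩ := hp.exists_gt_eval_pos (by omega) (ρ m)
  -- the nodes `L < ρ 0 < ⋯ < ρ m < M`, at which `p` alternates in sign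
  set t : ℕ → ℝ := fun k => if k = 0 then L else if k ≤ m + 1 then ρ (k - 1) else M with ht_def
  have ht : StrictMonoOn t (Set.Iic (m + 2)) := by
    refine strictMonoOn_Iic_of_lt_succ fun k hk => ?_
    simp only [ht_def, Order.succ_eq_add_one]
    split_ifs <;> first
      | contradiction
      | omega
      | (obtain rfl : k = 0 := by omega); simpa using hL
      | (obtain rfl : k = m + 1 := by omega); simpa using hρM
      | exact hρ (Set.mem_Iio.mpr (by omega)) (Set.mem_Iio.mpr (by omega)) (by omega)
  have hsign : ∀ k ≤ m + 2, 0 < (-1) ^ (m + 2 - k) * p.eval (t k) := by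
    intro k hk
    simp only [ht_def]
    split_ifs with h0 h1
    · simpa [h0] using hpL
    · rw [← show m + 1 - (k - 1) = m + 2 - k by omega]; exact hpρ (k - 1) (by omega)
    · rw [show k = m + 2 by omega]; simpa using hM
  obtain ⟨σ, hσt, hσ, hpσ⟩ := hp.exists_eq_prod_X_sub_C_of_alternating hpdeg ht fun k hk =>
    mul_neg_of_neg_one_pow_mul_pos (k := m + 1 - k)
      (by rw [show m + 1 - k + 1 = m + 2 - k by omega]; exact hsign k hk.le)
      (by rw [show m + 1 - k = m + 2 - (k + 1) by omega]; exact hsign (k + 1) hk)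
  refine ⟨σ, hσ, by simpa [ht_def] using (hσt 0 (by omega)).1, hpσ, fun k hk => ?_⟩
  have hbelow : ∀ i < k, ρ i < σ k := fun i hik => by
    have := (hσt k hk).1
    simp only [ht_def, if_neg (show k ≠ 0 by omega), if_pos (show k ≤ m + 1 by omega)] at this
    exact (hρ.monotoneOn (Set.mem_Iio.mpr (by omega)) (Set.mem_Iio.mpr (by omega))
      (by omega : i ≤ k - 1)).trans_lt this
  have habove : ∀ i, k ≤ i → i < m + 1 → σ k < ρ i := fun i hki him => by
    have := (hσt k hk).2
    simp only [ht_def, if_neg (show k + 1 ≠ 0 by omega), if_pos (show k + 1 ≤ m + 1 by omega),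
      Nat.add_sub_cancel] at this
    exact this.trans_le
      (hρ.monotoneOn (Set.mem_Iio.mpr (by omega)) (Set.mem_Iio.mpr (by omega)) hki)
  rw [hq]
  exact sign_eval_prod_X_sub_C hbelow habove

lemma charlierMonic_zeros_interlace (hα : 0 < α) (m : ℕ) :
    ∃ ρ : ℕ → ℝ, StrictMonoOn ρ (Set.Iio (m + 1)) ∧ 0 < ρ 0 ∧
      charlierMonic (m + 1) α = ∏ i ∈ range (m + 1), (X - C (ρ i)) ∧
      ∀ i < m + 1, 0 < (-1) ^ (m - i) * (charlierMonic m α).eval (ρ i) := by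
  induction m with
  | zero =>
    refine ⟨fun _ => α, fun i hi j hj hij => by rw [Set.mem_Iio] at hi hj; omega, hα,
      by simp [charlierMonic], fun i _ => by simp⟩
  | succ m ih =>
    obtain ⟨ρ, hρ, hρ0, hfac, hsign⟩ := ih
    have hroot : ∀ i < m + 1, (charlierMonic (m + 1) α).eval (ρ i) = 0 := fun i hi => by
      rw [hfac, eval_prod]
      exact prod_eq_zero (mem_range.mpr hi) (by simp)
    have hpL : 0 < (-1) ^ (m + 2) * (charlierMonic (m + 2) α).eval 0 := by
      rw [eval_zero_charlierMonic, ← mul_pow, neg_one_mul, neg_neg]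
      positivity
    have hpρ : ∀ i < m + 1, 0 < (-1) ^ (m + 1 - i) * (charlierMonic (m + 2) α).eval (ρ i) := by
      intro i hi
      rw [eval_charlierMonic_add_two, hroot i hi, show m + 1 - i = m - i + 1 by omega, pow_succ]
      have hQm := hsign i hi
      have hc : (0 : ℝ) < (m + 1) * α := by positivity
      nlinarith
    exact exists_interlacing_zeros hfac hρ hρ0 (charlierMonic_monic_natDegree _ α).1
      (charlierMonic_monic_natDegree _ α).2 hpL hpρ

def IsSortedCharlierZeros (K : ℕ) (α : ℝ) (z : Fin (K + 1) → ℝ) : Prop :=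
  StrictMono z ∧ (∀ j, 0 < z j) ∧ charlierMonic (K + 1) α = ∏ j, (X - C (z j)) ∧
    ∀ j : Fin (K + 1), 0 < (-1) ^ (K - j : ℕ) * (charlierMonic K α).eval (z j)

lemma exists_isSortedCharlierZeros (hα : 0 < α) (K : ℕ) :
    ∃ z, IsSortedCharlierZeros K α z := by
  obtain ⟨ρ, hρ, hρ0, hfac, hsign⟩ := charlierMonic_zeros_interlace hα K
  have hmono : StrictMono fun j : Fin (K + 1) => ρ j := fun i j hij =>
    hρ (Set.mem_Iio.mpr i.isLt) (Set.mem_Iio.mpr j.isLt) hij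
  refine ⟨fun j => ρ j, hmono, fun j => ?_, ?_, fun j => hsign j j.isLt⟩
  · exact hρ0.trans_le (hmono.monotone (Fin.zero_le j))
  · rw [hfac, Fin.prod_univ_eq_prod_range (fun i => X - C (ρ i))]

namespace IsSortedCharlierZeros

variable {K : ℕ} {z : Fin (K + 1) → ℝ} {δ : ℝ}

lemma eval_eq_prod (hz : IsSortedCharlierZeros K α z) (y : ℝ) :
    (charlierMonic (K + 1) α).eval y = ∏ j, (y - z j) := by
  simp [hz.2.2.1, eval_prod]

lemma eval_eq_zero_iff (hz : IsSortedCharlierZeros K α z) {y : ℝ} :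
    (charlierMonic (K + 1) α).eval y = 0 ↔ ∃ j, y = z j := by
  simp [hz.eval_eq_prod, prod_eq_zero_iff, sub_eq_zero]

lemma charlierPoly_eq_zero_iff (hz : IsSortedCharlierZeros K α z) (hα : α ≠ 0) {y : ℝ} :
    charlierPoly (K + 1) α y = 0 ↔ ∃ j, y = z j := by
  rw [← hz.eval_eq_zero_iff, eval_charlierMonic hα, mul_eq_zero,
    or_iff_right (pow_ne_zero _ (neg_ne_zero.mpr hα))]

lemma eq_of_strictMono (hz : IsSortedCharlierZeros K α z) {w : Fin (K + 1) → ℝ}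
    (hw : StrictMono w) (hw0 : ∀ i, (charlierMonic (K + 1) α).eval (w i) = 0) : w = z :=
  hw.eq_of_forall_mem_range hz.1 fun i => by
    obtain ⟨j, hj⟩ := hz.eval_eq_zero_iff.mp (hw0 i)
    exact ⟨j, hj.symm⟩

lemma exists_isolating_radius (hz : IsSortedCharlierZeros K α z) :
    ∃ δ > 0, (∀ i k, i < k → z i + δ < z k - δ) ∧
      ∀ i, ∀ t ∈ Metric.closedBall α δ, ∀ y ∈ Metric.closedBall (z i) δ,
        0 < (-1) ^ (K - i : ℕ) * (charlierMonic K t).eval y := by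
  have hgap : ∀ i k, ∀ᶠ δ in 𝓝 (0 : ℝ), i < k → z i + δ < z k - δ := by
    intro i k
    by_cases hik : i < k
    · have h := ((show Continuous fun δ : ℝ => z i + δ by fun_prop).tendsto 0).eventually_lt
        ((show Continuous fun δ : ℝ => z k - δ by fun_prop).tendsto 0) (by simpa using hz.1 hik)
      exact h.mono fun δ hδ _ => hδ
    · exact Eventually.of_forall fun δ h => absurd h hik
  have hbox : ∀ i, ∀ᶠ δ in 𝓝 (0 : ℝ), Metric.closedBall (α, z i) δ ⊆
      {p | 0 < (-1) ^ (K - i : ℕ) * (charlierMonic K p.1).eval p.2} := fun i =>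
    eventually_closedBall_subset ((isOpen_lt continuous_const
      (continuous_const.mul (continuous_eval_charlierMonic K))).mem_nhds (hz.2.2.2 i))
  obtain ⟨δ, ⟨hgapδ, hboxδ⟩, hδ⟩ := ((((eventually_all.2 fun i => eventually_all.2 (hgap i)).and
    (eventually_all.2 hbox)).filter_mono nhdsWithin_le_nhds).and
      (self_mem_nhdsWithin (s := Set.Ioi 0))).exists
  refine ⟨δ, hδ, hgapδ, fun i t ht y hy => hboxδ i (show (t, y) ∈ _ from ?_)⟩
  rw [← closedBall_prod_same]
  exact ⟨ht, hy⟩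

lemma mem_Ioo_of_mul_neg {w : Fin (K + 1) → ℝ} (hw : IsSortedCharlierZeros K α w) (hδ : 0 < δ)
    (hgap : ∀ i k, i < k → z i + δ < z k - δ)
    (hsign : ∀ i, (charlierMonic (K + 1) α).eval (z i - δ) *
      (charlierMonic (K + 1) α).eval (z i + δ) < 0) (i : Fin (K + 1)) :
    w i ∈ Set.Ioo (z i - δ) (z i + δ) := by
  have hroot : ∀ i, ∃ c ∈ Set.Ioo (z i - δ) (z i + δ), (charlierMonic (K + 1) α).eval c = 0 :=
    fun i => exists_mem_Ioo_eq_zero_of_mul_neg (by linarith)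
      (charlierMonic (K + 1) α).continuous.continuousOn (hsign i)
  choose c hc hc0 using hroot
  have hcmono : StrictMono c := fun i k hik => by linarith [(hc i).2, (hc k).1, hgap i k hik]
  rw [← hw.eq_of_strictMono hcmono hc0]
  exact hc i

/-- Since `∂_α Q_{K+1} = -(K+1) Q_K` and `Q_K` has sign `(-1) ^ (K - j)` around the `j`-th zero,
increasing `α` from `u` to `v` pushes that zero to the right. -/
lemma apply_lt_apply_of_lt {u v : ℝ} {wu wv : Fin (K + 1) → ℝ} (hu : IsSortedCharlierZeros K u wu)
    (hv : IsSortedCharlierZeros K v wv) (huv : u < v) (hgap : ∀ i k, i < k → z i + δ < z k - δ)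
    (j : Fin (K + 1)) (hlocu : wu j ∈ Set.Ioo (z j - δ) (z j + δ))
    (hlocv : ∀ i, wv i ∈ Set.Ioo (z i - δ) (z i + δ))
    (hP : ∀ τ ∈ Set.Ioo u v, 0 < (-1) ^ (K - j : ℕ) * (charlierMonic K τ).eval (wu j))
    (hRv : 0 < (-1) ^ (K - j : ℕ) * (charlierMonic (K + 1) v).eval (z j + δ)) :
    wu j < wv j := by
  set y := wu j
  obtain ⟨τ, hτ, hslope⟩ := exists_hasDerivAt_eq_slope
    (fun s => (charlierMonic (K + 1) s).eval y) (fun s => -(K + 1) * (charlierMonic K s).eval y)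
    huv (fun s _ => (hasDerivAt_eval_charlierMonic K y s).continuousAt.continuousWithinAt)
    (fun s _ => hasDerivAt_eval_charlierMonic K y s)
  have hu0 : (charlierMonic (K + 1) u).eval y = 0 := hu.eval_eq_zero_iff.mpr ⟨j, rfl⟩
  rw [hu0, sub_zero, eq_div_iff (sub_pos.mpr huv).ne'] at hslope
  have hneg : 0 < (-1) ^ (K - j + 1 : ℕ) * (charlierMonic (K + 1) v).eval y := by
    have hτP := hP τ hτ
    have : 0 < (v - u) * (K + 1) := mul_pos (sub_pos.mpr huv) (by positivity)
    rw [pow_succ, ← hslope]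
    nlinarith
  obtain ⟨w, hw, hw0⟩ := exists_mem_Ioo_eq_zero_of_mul_neg hlocu.2.le
    (charlierMonic (K + 1) v).continuous.continuousOn (mul_neg_of_neg_one_pow_mul_pos hneg hRv)
  obtain ⟨i, rfl⟩ := hv.eval_eq_zero_iff.mp hw0
  obtain rfl : i = j := by
    rcases lt_trichotomy i j with hij | hij | hji
    · linarith [(hlocv i).2, hgap i j hij, hlocu.1, hw.1]
    · exact hij
    · linarith [(hlocv i).1, hgap j i hji, hw.2]
  exact hw.1

end IsSortedCharlierZeros

lemma StrictMonoOn.union_of_ordConnected {γ β : Type*} [LinearOrder γ] [Preorder β] {f : γ → β}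
    {s t : Set γ} {c : γ} (hs : StrictMonoOn f s) (ht : StrictMonoOn f t) (hs' : s.OrdConnected)
    (ht' : t.OrdConnected) (hcs : c ∈ s) (hct : c ∈ t) : StrictMonoOn f (s ∪ t) := by
  have across : ∀ {s t : Set γ}, StrictMonoOn f s → StrictMonoOn f t → s.OrdConnected →
      t.OrdConnected → c ∈ s → c ∈ t → ∀ a ∈ s, ∀ b ∈ t, a < b → f a < f b := by
    intro s t hs ht hs' ht' hcs hct a ha b hb hab
    rcases le_or_gt c a with hca | hac
    · exact ht (ht'.out hct hb ⟨hca, hab.le⟩) hb hab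
    rcases le_or_gt b c with hbc | hcb
    · exact hs ha (hs'.out ha hcs ⟨hab.le, hbc⟩) hab
    exact (hs ha hcs hac).trans (ht hct hb hcb)
  rintro a (ha | ha) b (hb | hb) hab
  · exact hs ha hb hab
  · exact across hs ht hs' ht' hcs hct a ha b hb hab
  · exact across ht hs ht' hs' hct hcs a ha b hb hab
  · exact ht ha hb hab

lemma strictMonoOn_of_forall_exists_nhdsWithin {β : Type*} [Preorder β] {f : ℝ → β}
    {s : Set ℝ} (hs : s.OrdConnected) (h : ∀ a ∈ s, ∃ U ∈ 𝓝[s] a, StrictMonoOn f U) :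
    StrictMonoOn f s := by
  intro a ha b hb hab
  refine hs.isPreconnected.induction₂ (fun x y => StrictMonoOn f (Set.uIcc x y))
    (fun x hx => ?_) (fun x y z _ _ _ hxy hyz => ?_) (fun x y _ _ h => by rwa [Set.uIcc_comm])
    ha hb Set.left_mem_uIcc Set.right_mem_uIcc hab
  · obtain ⟨U, hU, hfU⟩ := h x hx
    obtain ⟨ε, hε, hball⟩ := Metric.mem_nhdsWithin_iff.mp hU
    filter_upwards [inter_mem_nhdsWithin s (Metric.ball_mem_nhds x hε)] with y ⟨hys, hyb⟩
    have hconn : (Metric.ball x ε ∩ s).OrdConnected := (convex_ball x ε).ordConnected.inter hs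
    exact hfU.mono ((hconn.uIcc_subset ⟨Metric.mem_ball_self hε, hx⟩ ⟨hyb, hys⟩).trans hball)
  · exact (hxy.union_of_ordConnected hyz Set.ordConnected_uIcc Set.ordConnected_uIcc
      Set.right_mem_uIcc Set.left_mem_uIcc).mono Set.uIcc_subset_uIcc_union_uIcc

lemma exists_nhds_strictMonoOn_sortedCharlierZero {K : ℕ} {x : ℝ → Fin (K + 1) → ℝ}
    (hx : ∀ t, 0 < t → IsSortedCharlierZeros K t (x t)) (hα : 0 < α) (j : Fin (K + 1)) :
    ∃ U ∈ 𝓝 α, StrictMonoOn (fun t => x t j) U := by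
  set z := x α
  obtain ⟨δ, hδ, hgap, hbox⟩ := (hx α hα).exists_isolating_radius
  have hcont : ∀ y, Continuous fun t => (charlierMonic (K + 1) t).eval y := fun y =>
    (continuous_eval_charlierMonic (K + 1)).comp (Continuous.prodMk_left y)
  have hU : ∀ᶠ t in 𝓝 α, 0 < t ∧ t ∈ Metric.closedBall α δ ∧
      ∀ i : Fin (K + 1), 0 < (-1) ^ (K - i + 1 : ℕ) * (charlierMonic (K + 1) t).eval (z i - δ) ∧
        0 < (-1) ^ (K - i : ℕ) * (charlierMonic (K + 1) t).eval (z i + δ) := by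
    refine (lt_mem_nhds hα).and (Eventually.and (Metric.closedBall_mem_nhds α hδ)
      (eventually_all.2 fun i => ?_))
    obtain ⟨hlo, hhi⟩ := sign_prod_sub_of_separated hδ hgap i
    rw [← (hx α hα).eval_eq_prod, show K + 1 - i = K - i + 1 by omega] at hlo
    rw [← (hx α hα).eval_eq_prod, Nat.add_sub_cancel] at hhi
    exact (((continuous_const.mul (hcont _)).tendsto α).eventually_const_lt hlo).and
      (((continuous_const.mul (hcont _)).tendsto α).eventually_const_lt hhi)
  obtain ⟨U, hUα, hUprop⟩ := hU.exists_mem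
  have hloc : ∀ t ∈ U, ∀ i, x t i ∈ Set.Ioo (z i - δ) (z i + δ) := fun t ht =>
    (hx t (hUprop t ht).1).mem_Ioo_of_mul_neg hδ hgap fun i =>
      mul_neg_of_neg_one_pow_mul_pos ((hUprop t ht).2.2 i).1 ((hUprop t ht).2.2 i).2
  refine ⟨U, hUα, fun u hu v hv huv => ?_⟩
  obtain ⟨hu0, huδ, -⟩ := hUprop u hu
  obtain ⟨hv0, hvδ, hvsign⟩ := hUprop v hv
  refine (hx u hu0).apply_lt_apply_of_lt (hx v hv0) huv hgap j (hloc u hu j) (hloc v hv)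
    (fun τ hτ => hbox j τ ?_ (x u j) ?_) (hvsign j).2
  · exact (convex_closedBall α δ).ordConnected.out huδ hvδ (Set.Ioo_subset_Icc_self hτ)
  · have := hloc u hu j
    rw [Metric.mem_closedBall, Real.dist_eq, abs_le]
    constructor <;> linarith [this.1, this.2]

/-- zeros of Charlier polynomials: location and monotonicity in `α`. -/
theorem stmt_3 (n : ℕ) (hn : 1 ≤ n) :
    ∃ x : ℝ → Fin n → ℝ,
      (∀ α : ℝ, 0 < α →
        StrictMono (x α) ∧
        (∀ j, x α j ∈ Set.Ioi (0 : ℝ)) ∧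
        (∀ j, charlierPoly n α (x α j) = 0) ∧
        (∀ y : ℝ, charlierPoly n α y = 0 → ∃ j, y = x α j)) ∧
      (∀ j, StrictMonoOn (fun α => x α j) (Set.Ioi 0)) := by
  obtain ⟨K, rfl⟩ : ∃ K, n = K + 1 := ⟨n - 1, by omega⟩
  set x : ℝ → Fin (K + 1) → ℝ := fun α =>
    if hα : 0 < α then (exists_isSortedCharlierZeros hα K).choose else 0
  have hx : ∀ α, 0 < α → IsSortedCharlierZeros K α (x α) := fun α hα => by
    simpa only [x, dif_pos hα] using (exists_isSortedCharlierZeros hα K).choose_spec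
  refine ⟨x, fun α hα => ⟨(hx α hα).1, (hx α hα).2.1, fun j => ?_, fun y => ?_⟩, fun j => ?_⟩
  · exact ((hx α hα).charlierPoly_eq_zero_iff hα.ne').mpr ⟨j, rfl⟩
  · exact ((hx α hα).charlierPoly_eq_zero_iff hα.ne').mp
  · refine strictMonoOn_of_forall_exists_nhdsWithin Set.ordConnected_Ioi fun α hα => ?_
    obtain ⟨U, hU, hmono⟩ := exists_nhds_strictMonoOn_sortedCharlierZero hx hα j
    exact ⟨U, mem_nhdsWithin_of_mem_nhds hU, hmono⟩
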